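/- For a finite subset Ω of the vertex set of a graph and a subset K of the closure of Ω (Ω together with its exterior vertex boundary), K is of least perimeter in Ω if and only if the indicator function 1_K is of least gradient in Ω. -/

import Mathlib

open Set MeasureTheory

variable {V : Type*}

/-- Exterior vertex boundary of a set of vertices. -/
def extB (G : SimpleGraph V) (Ω : Set V) : Set V := {z | z ∉ Ω ∧ ∃ w ∈ Ω, G.Adj z w}

/-- Closure: the set together with its exterior vertex boundary. -/
def clos (G : SimpleGraph V) (Ω : Set V) : Set V := Ω ∪ extB G Ω

/-- Directed version of the edge set `E_Ω = E(Ω, Ω̄)`. -/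
def dirE (G : SimpleGraph V) (Ω : Set V) : Set (V × V) :=
  {p | G.Adj p.1 p.2 ∧ p.1 ∈ clos G Ω ∧ p.2 ∈ clos G Ω ∧ (p.1 ∈ Ω ∨ p.2 ∈ Ω)}

/-- Directed edge boundary of `F`: ordered pairs `(x, y)` with `x ∈ F`, `y ∉ F`, `x ∼ y`.
Each undirected boundary edge is counted exactly once. -/
def dirBdry (G : SimpleGraph V) (F : Set V) : Set (V × V) :=
  {p | G.Adj p.1 p.2 ∧ p.1 ∈ F ∧ p.2 ∉ F}

/-- The 1-Dirichlet energy `J_Ω(f) = (1/2) Σ_{directed edges of E_Ω} |f(y) - f(x)|`,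
i.e. each undirected edge of `E_Ω` contributes `|f(y)-f(x)|` once. -/
noncomputable def J (G : SimpleGraph V) (Ω : Set V) (f : V → ℝ) : ℝ :=
  (1/2) * ∑ᶠ p ∈ dirE G Ω, |f p.2 - f p.1|

/-- `A` is a minimal (area-minimizing) subgraph. -/
def IsMinimalG (G : SimpleGraph V) (A : Set V) : Prop :=
  ∀ Ω : Set V, Ω.Finite → ∀ F : Set V, symmDiff F A ⊆ Ω →
    (dirBdry G A ∩ dirE G Ω).ncard ≤ (dirBdry G F ∩ dirE G Ω).ncard

lemma dirE_swap {G : SimpleGraph V} {Ω : Set V} {p : V × V} (hp : p ∈ dirE G Ω) :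
    p.swap ∈ dirE G Ω :=
  ⟨hp.1.symm, hp.2.2.1, hp.2.1, hp.2.2.2.symm⟩

lemma clos_finite (G : SimpleGraph V) (hlf : ∀ v : V, (G.neighborSet v).Finite)
    {Ω : Set V} (hΩ : Ω.Finite) : (clos G Ω).Finite := by
  apply Set.Finite.union hΩ
  apply (Set.Finite.biUnion hΩ (fun w _ => hlf w)).subset
  rintro z ⟨hz, w, hw, hadj⟩
  exact Set.mem_biUnion hw hadj.symm

lemma dirE_finite (G : SimpleGraph V) (hlf : ∀ v : V, (G.neighborSet v).Finite)
    {Ω : Set V} (hΩ : Ω.Finite) : (dirE G Ω).Finite :=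
  ((clos_finite G hlf hΩ).prod (clos_finite G hlf hΩ)).subset
    (fun _ hp => ⟨hp.2.1, hp.2.2.1⟩)

/-- Double counting: crossing directed edges are twice the directed boundary edges. -/
lemma cross_ncard (G : SimpleGraph V) (Ω : Set V) (hD : (dirE G Ω).Finite) (F : Set V) :
    {p | p ∈ dirE G Ω ∧ Xor' (p.1 ∈ F) (p.2 ∈ F)}.ncard
      = 2 * (dirBdry G F ∩ dirE G Ω).ncard := by
  classical
  set A := dirBdry G F ∩ dirE G Ω with hAdef
  have hA : A.Finite := hD.subset inter_subset_right
  have hset : {p | p ∈ dirE G Ω ∧ Xor' (p.1 ∈ F) (p.2 ∈ F)} = A ∪ Prod.swap '' A := by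
    ext p
    constructor
    · rintro ⟨hpE, hx⟩
      rcases hx with ⟨h1, h2⟩ | ⟨h2, h1⟩
      · exact Or.inl ⟨⟨hpE.1, h1, h2⟩, hpE⟩
      · refine Or.inr ⟨p.swap, ⟨⟨hpE.1.symm, h2, h1⟩, dirE_swap hpE⟩, Prod.swap_swap p⟩
    · rintro (⟨⟨ha, h1, h2⟩, hpE⟩ | ⟨q, ⟨⟨ha, h1, h2⟩, hqE⟩, rfl⟩)
      · exact ⟨hpE, Or.inl ⟨h1, h2⟩⟩
      · exact ⟨dirE_swap hqE, Or.inr ⟨h1, h2⟩⟩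
  rw [hset, Set.ncard_union_eq ?_ hA (hA.image _),
    Set.ncard_image_of_injective _ Prod.swap_injective, two_mul]
  rw [Set.disjoint_left]
  rintro p ⟨⟨_, h1, h2⟩, _⟩ ⟨q, ⟨⟨_, h1', h2'⟩, _⟩, rfl⟩
  exact h2 h1'

/-- The energy of an indicator is the (directed) perimeter. -/
lemma J_indicator (G : SimpleGraph V) (Ω : Set V) (hD : (dirE G Ω).Finite) (F : Set V) :
    J G Ω (F.indicator fun _ => (1 : ℝ)) = (dirBdry G F ∩ dirE G Ω).ncard := by
  classical
  rw [J, finsum_mem_eq_finite_toFinset_sum _ hD]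
  have hterm : ∀ p ∈ hD.toFinset,
      |F.indicator (fun _ => (1:ℝ)) p.2 - F.indicator (fun _ => (1:ℝ)) p.1|
        = if Xor' (p.1 ∈ F) (p.2 ∈ F) then (1:ℝ) else 0 := by
    intro p _
    by_cases h1 : p.1 ∈ F <;> by_cases h2 : p.2 ∈ F <;>
      simp [Set.indicator_apply, h1, h2, Xor']
  rw [Finset.sum_congr rfl hterm, Finset.sum_boole]
  have hsets : {p | p ∈ dirE G Ω ∧ Xor' (p.1 ∈ F) (p.2 ∈ F)}
      = ↑(hD.toFinset.filter (fun p => Xor' (p.1 ∈ F) (p.2 ∈ F))) := by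
    ext p; simp [Set.Finite.mem_toFinset]
  have := cross_ncard G Ω hD F
  rw [hsets, Set.ncard_coe_finset] at this
  rw [this]
  push_cast
  ring


/-- `K ⊆ Ω̄` is of least perimeter in finite `Ω` iff `1_K` is of least gradient in `Ω`. -/
theorem least_perimeter_iff_least_gradient
    (G : SimpleGraph V) (hlf : ∀ v : V, (G.neighborSet v).Finite)
    (Ω : Set V) (hΩ : Ω.Finite) (K : Set V) (hK : K ⊆ clos G Ω) :
    (∀ K' : Set V, K' ⊆ clos G Ω → K' ∩ extB G Ω = K ∩ extB G Ω →
      (dirBdry G K ∩ dirE G Ω).ncard ≤ (dirBdry G K' ∩ dirE G Ω).ncard)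
    ↔
    (∀ g : V → ℝ, (∀ x ∈ extB G Ω, g x = K.indicator (fun _ => (1 : ℝ)) x) →
      J G Ω (K.indicator fun _ => (1 : ℝ)) ≤ J G Ω g) := by
  classical
  have hD : (dirE G Ω).Finite := dirE_finite G hlf hΩ
  constructor
  · -- least perimeter → least gradient
    intro hper g hg
    set perK : ℕ := (dirBdry G K ∩ dirE G Ω).ncard with hperK
    rw [J_indicator G Ω hD K]
    set D := hD.toFinset with hDdef
    rw [J, finsum_mem_eq_finite_toFinset_sum _ hD]
    -- level sets
    set F : ℝ → Set V := fun t => {x | x ∈ clos G Ω ∧ t < g x} with hF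
    -- each term as an integral
    have hterm : ∀ p : V × V,
        |g p.2 - g p.1|
          = ∫ t : ℝ, (Set.Ico (min (g p.1) (g p.2)) (max (g p.1) (g p.2))).indicator
              (fun _ => (1:ℝ)) t := by
      intro p
      rw [MeasureTheory.integral_indicator_const (1:ℝ) measurableSet_Ico, smul_eq_mul,
        mul_one, Real.volume_real_Ico_of_le min_le_max,
        max_sub_min_eq_abs, abs_sub_comm]
    have hint : ∀ p : V × V, Integrable
        ((Set.Ico (min (g p.1) (g p.2)) (max (g p.1) (g p.2))).indicator
          (fun _ => (1:ℝ))) := by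
      intro p
      rw [integrable_indicator_iff measurableSet_Ico]
      exact integrableOn_const measure_Ico_lt_top.ne
    have key : ((2 * perK : ℕ) : ℝ) ≤ ∑ p ∈ D, |g p.2 - g p.1| := by
      calc ((2 * perK : ℕ) : ℝ)
          = ∫ t : ℝ, (Set.Ico (0:ℝ) 1).indicator (fun _ => ((2 * perK : ℕ) : ℝ)) t := by
            rw [MeasureTheory.integral_indicator_const _ measurableSet_Ico, smul_eq_mul,
              Real.volume_real_Ico_of_le (by norm_num), sub_zero, one_mul]
        _ ≤ ∫ t : ℝ, ∑ p ∈ D, (Set.Ico (min (g p.1) (g p.2)) (max (g p.1) (g p.2))).indicator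
              (fun _ => (1:ℝ)) t := by
          apply MeasureTheory.integral_mono
          · rw [integrable_indicator_iff measurableSet_Ico]
            exact integrableOn_const measure_Ico_lt_top.ne
          · exact MeasureTheory.integrable_finset_sum _ (fun p _ => hint p)
          intro t
          dsimp only
          by_cases ht : t ∈ Set.Ico (0:ℝ) 1
          · rw [Set.indicator_of_mem ht]
            -- count crossings at level t
            have hsum : ∑ p ∈ D, (Set.Ico (min (g p.1) (g p.2)) (max (g p.1) (g p.2))).indicator
                (fun _ => (1:ℝ)) t
                = ((D.filter (fun p => Xor' (p.1 ∈ F t) (p.2 ∈ F t))).card : ℝ) := by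
              rw [← Finset.sum_boole]
              apply Finset.sum_congr rfl
              intro p hp
              have hpE : p ∈ dirE G Ω := by rwa [hDdef, Set.Finite.mem_toFinset] at hp
              have h1c : p.1 ∈ clos G Ω := hpE.2.1
              have h2c : p.2 ∈ clos G Ω := hpE.2.2.1
              have hiff : t ∈ Set.Ico (min (g p.1) (g p.2)) (max (g p.1) (g p.2))
                  ↔ Xor' (p.1 ∈ F t) (p.2 ∈ F t) := by
                have e1 : p.1 ∈ F t ↔ t < g p.1 := by simp [hF, h1c]
                have e2 : p.2 ∈ F t ↔ t < g p.2 := by simp [hF, h2c]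
                rw [e1, e2, Set.mem_Ico]
                constructor
                · rintro ⟨hmin, hmax⟩
                  rcases le_total (g p.1) (g p.2) with hle | hle
                  · rw [min_eq_left hle] at hmin
                    rw [max_eq_right hle] at hmax
                    exact Or.inr ⟨hmax, not_lt.2 hmin⟩
                  · rw [min_eq_right hle] at hmin
                    rw [max_eq_left hle] at hmax
                    exact Or.inl ⟨hmax, not_lt.2 hmin⟩
                · rintro (⟨ha, hb⟩ | ⟨ha, hb⟩)
                  · exact ⟨le_trans (min_le_right _ _) (not_lt.1 hb),
                      lt_of_lt_of_le ha (le_max_left _ _)⟩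
                  · exact ⟨le_trans (min_le_left _ _) (not_lt.1 hb),
                      lt_of_lt_of_le ha (le_max_right _ _)⟩
              by_cases hx : Xor' (p.1 ∈ F t) (p.2 ∈ F t)
              · rw [Set.indicator_of_mem (hiff.2 hx), if_pos hx]
              · rw [Set.indicator_of_notMem (fun hm => hx (hiff.1 hm)), if_neg hx]
            rw [hsum]
            -- perimeter inequality at level t
            have hFsub : F t ⊆ clos G Ω := fun x hx => hx.1
            have hFbd : F t ∩ extB G Ω = K ∩ extB G Ω := by
              ext x
              constructor
              · rintro ⟨⟨hxc, hxt⟩, hxe⟩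
                refine ⟨?_, hxe⟩
                by_contra hxK
                rw [hg x hxe, Set.indicator_of_notMem hxK] at hxt
                exact absurd hxt (not_lt.2 ht.1)
              · rintro ⟨hxK, hxe⟩
                refine ⟨⟨Or.inr hxe, ?_⟩, hxe⟩
                rw [hg x hxe, Set.indicator_of_mem hxK]
                exact ht.2
            have hge := hper (F t) hFsub hFbd
            have hcnt : (D.filter (fun p => Xor' (p.1 ∈ F t) (p.2 ∈ F t))).card
                = 2 * (dirBdry G (F t) ∩ dirE G Ω).ncard := by
              have hsets : {p | p ∈ dirE G Ω ∧ Xor' (p.1 ∈ F t) (p.2 ∈ F t)}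
                  = ↑(D.filter (fun p => Xor' (p.1 ∈ F t) (p.2 ∈ F t))) := by
                ext p; simp [hDdef, Set.Finite.mem_toFinset]
              have := cross_ncard G Ω hD (F t)
              rw [hsets, Set.ncard_coe_finset] at this
              exact this
            rw [hcnt]
            have : 2 * perK ≤ 2 * (dirBdry G (F t) ∩ dirE G Ω).ncard :=
              Nat.mul_le_mul_left 2 hge
            exact_mod_cast this
          · rw [Set.indicator_of_notMem ht]
            apply Finset.sum_nonneg
            intro p _
            exact Set.indicator_nonneg (fun _ _ => zero_le_one) t
        _ = ∑ p ∈ D, ∫ t : ℝ, (Set.Ico (min (g p.1) (g p.2)) (max (g p.1) (g p.2))).indicator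
              (fun _ => (1:ℝ)) t := MeasureTheory.integral_finset_sum _ (fun p _ => hint p)
        _ = ∑ p ∈ D, |g p.2 - g p.1| :=
            Finset.sum_congr rfl (fun p _ => (hterm p).symm)
    push_cast at key
    linarith
  · -- least gradient → least perimeter
    intro hJ K' hK' hKb
    have hbd : ∀ x ∈ extB G Ω, (K'.indicator (fun _ => (1:ℝ))) x
        = K.indicator (fun _ => (1 : ℝ)) x := by
      intro x hx
      by_cases hxK : x ∈ K
      · have hxK' : x ∈ K' := by
          have : x ∈ K' ∩ extB G Ω := hKb ▸ ⟨hxK, hx⟩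
          exact this.1
        rw [Set.indicator_of_mem hxK, Set.indicator_of_mem hxK']
      · have hxK' : x ∉ K' := fun h => hxK ((hKb ▸ (⟨h, hx⟩ : x ∈ K' ∩ extB G Ω)) : x ∈ K ∩ extB G Ω).1
        rw [Set.indicator_of_notMem hxK, Set.indicator_of_notMem hxK']
    have := hJ (K'.indicator fun _ => (1:ℝ)) hbd
    rw [J_indicator G Ω hD K, J_indicator G Ω hD K'] at this
    exact_mod_cast this
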